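/- Let U denote the set of p×p matrices that are permutation similar to strictly upper triangular matrices. Given B₀ ∈ U and diagonal positive definite Ω₀, let Σ = (I−B₀)⁻ᵀ Ω₀ (I−B₀)⁻¹ and define score_{Ω₀}(B) = tr(Ω₀^{-1/2} (I−B)ᵀ Σ (I−B) Ω₀^{-1/2}). Then for every B ∈ U, score_{Ω₀}(B) ≥ p, with equality if and only if B = B₀. -/

import Mathlib

/-!
Write `L = I - B`, `L₀ = I - B₀` and `G = Ω₀^{-1/2} Lᵀ Σ L Ω₀^{-1/2}`, whose trace is the score.
Acyclic support makes `L` and `L₀` unipotent, so `G` is positive semidefinite with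
`det G = det Ω₀⁻¹ · det Σ = 1`, and AM–GM on its eigenvalues gives `tr G ≥ p`, with equality iff
`G = I`, i.e. iff `Σ = L⁻ᵀ Ω₀ L⁻¹`. Inverting, this says
`(I - B) Ω₀⁻¹ (I - B)ᵀ = (I - B₀) Ω₀⁻¹ (I - B₀)ᵀ`, and such a factorisation with acyclic `B` is
unique: if row `j` of `B` vanishes (a sink), comparing `(j, j)` entries forces row `j` of `B₀` to
vanish too, column `j` of both sides then gives column `j` of `B = B₀`, and deleting node `j` leaves
an instance of the same problem.
-/

open Matrix

/-- `B` is permutation similar to a strictly upper triangular matrix. -/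
def PermStrictUpper {p : ℕ} (B : Matrix (Fin p) (Fin p) ℝ) : Prop :=
  ∃ σ : Equiv.Perm (Fin p), ∀ i j : Fin p, ¬ i < j → B (σ i) (σ j) = 0

/-- The weighted squared-ℓ₂ score
`score d S B = tr (Ω^{-1/2} (I-B)ᵀ S (I-B) Ω^{-1/2})` with `Ω = diagonal d`. -/
noncomputable def score {p : ℕ} (d : Fin p → ℝ) (S B : Matrix (Fin p) (Fin p) ℝ) : ℝ :=
  (Matrix.diagonal (fun j => (Real.sqrt (d j))⁻¹) * (1 - B)ᵀ * S * (1 - B) *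
    Matrix.diagonal (fun j => (Real.sqrt (d j))⁻¹)).trace

namespace Matrix

variable {n R : Type*}

/-- The support digraph of `B` (edges `i → j` for `B i j ≠ 0`) is acyclic, witnessed by a
potential `f` that strictly increases along every edge. -/
def HasAcyclicSupport [Zero R] (B : Matrix n n R) : Prop :=
  ∃ f : n → ℕ, ∀ i j, B i j ≠ 0 → f i < f j

namespace HasAcyclicSupport

variable {B : Matrix n n R}

lemma diag_eq_zero [Zero R] (hB : B.HasAcyclicSupport) (i : n) : B i i = 0 := by
  obtain ⟨f, hf⟩ := hB
  by_contra h
  exact (hf i i h).false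

lemma submatrix [Zero R] {m : Type*} (hB : B.HasAcyclicSupport) (e : m → n) :
    (B.submatrix e e).HasAcyclicSupport :=
  let ⟨f, hf⟩ := hB
  ⟨f ∘ e, fun i j => hf (e i) (e j)⟩

lemma exists_row_eq_zero [Zero R] [Finite n] [Nonempty n] (hB : B.HasAcyclicSupport) :
    ∃ j, ∀ k, B j k = 0 := by
  obtain ⟨f, hf⟩ := hB
  obtain ⟨j, hj⟩ := Finite.exists_max f
  exact ⟨j, fun k => by_contra fun h => (hf j k h).not_ge (hj k)⟩

variable [Fintype n] [DecidableEq n] [CommRing R]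

lemma det_one_sub (hB : B.HasAcyclicSupport) : (1 - B).det = 1 := by
  obtain ⟨f, hf⟩ := hB
  have htri : (1 - B).BlockTriangular f := fun i j hji => by
    rw [sub_apply, one_apply_ne (ne_of_apply_ne f hji.ne'), zero_sub, neg_eq_zero]
    by_contra h
    exact (hf i j h).not_gt hji
  refine htri.det.trans (Finset.prod_eq_one fun a _ => ?_)
  have hblock : (1 - B).toSquareBlock f a = 1 := by
    ext ⟨i, hi⟩ ⟨j, hj⟩
    have hBij : B i j = 0 := by_contra fun h => (hf i j h).ne (hi.trans hj.symm)
    simp [toSquareBlock_def, one_apply, hBij]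
  rw [hblock, det_one]

lemma isUnit_det_one_sub (hB : B.HasAcyclicSupport) : IsUnit (1 - B).det :=
  hB.det_one_sub ▸ isUnit_one

end HasAcyclicSupport

end Matrix

lemma PermStrictUpper.hasAcyclicSupport {p : ℕ} {B : Matrix (Fin p) (Fin p) ℝ}
    (hB : PermStrictUpper B) : B.HasAcyclicSupport := by
  obtain ⟨σ, hσ⟩ := hB
  refine ⟨fun i => σ.symm i, fun i j hij => ?_⟩
  by_contra h
  exact hij (by simpa using hσ (σ.symm i) (σ.symm j) (mt Fin.lt_def.mp h))

namespace Real

variable {ι : Type*} [Fintype ι] {x : ι → ℝ}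

lemma sum_sub_card_eq_sum_sub_one_sub_log (hx : ∀ i, 0 < x i) (hprod : ∏ i, x i = 1) :
    ∑ i, x i - Fintype.card ι = ∑ i, (x i - 1 - log (x i)) := by
  rw [Finset.sum_sub_distrib, Finset.sum_sub_distrib, ← log_prod fun i _ => (hx i).ne', hprod,
    log_one]
  simp

lemma card_le_sum_of_prod_eq_one (hx : ∀ i, 0 < x i) (hprod : ∏ i, x i = 1) :
    (Fintype.card ι : ℝ) ≤ ∑ i, x i := by
  have hgap : 0 ≤ ∑ i, (x i - 1 - log (x i)) :=
    Finset.sum_nonneg fun i _ => by linarith [log_le_sub_one_of_pos (hx i)]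
  linarith [sum_sub_card_eq_sum_sub_one_sub_log hx hprod]

lemma sum_eq_card_iff_of_prod_eq_one (hx : ∀ i, 0 < x i) (hprod : ∏ i, x i = 1) :
    ∑ i, x i = Fintype.card ι ↔ ∀ i, x i = 1 := by
  rw [← sub_eq_zero, sum_sub_card_eq_sum_sub_one_sub_log hx hprod,
    Finset.sum_eq_zero_iff_of_nonneg fun i _ => by linarith [log_le_sub_one_of_pos (hx i)]]
  refine forall_congr' fun i => ⟨fun h => ?_, fun h => by simp [h]⟩
  by_contra hne
  linarith [h (Finset.mem_univ i), log_lt_sub_one_of_pos (hx i) hne]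

end Real

namespace Matrix

variable {n : Type*} [Fintype n] [DecidableEq n]

namespace PosSemidef

variable {A : Matrix n n ℝ}

lemma prod_eigenvalues_of_det_eq_one (hA : A.PosSemidef) (hdet : A.det = 1) :
    ∏ i, hA.1.eigenvalues i = 1 := by
  simpa [hA.1.det_eq_prod_eigenvalues] using hdet

lemma eigenvalues_pos_of_det_eq_one (hA : A.PosSemidef) (hdet : A.det = 1) (i : n) :
    0 < hA.1.eigenvalues i :=
  (hA.posDef_iff_det_ne_zero.mpr (by simp [hdet])).eigenvalues_pos i

lemma trace_eq_sum_eigenvalues (hA : A.PosSemidef) : A.trace = ∑ i, hA.1.eigenvalues i := by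
  simpa using hA.1.trace_eq_sum_eigenvalues

lemma card_le_trace_of_det_eq_one (hA : A.PosSemidef) (hdet : A.det = 1) :
    (Fintype.card n : ℝ) ≤ A.trace :=
  hA.trace_eq_sum_eigenvalues ▸ Real.card_le_sum_of_prod_eq_one
    (hA.eigenvalues_pos_of_det_eq_one hdet) (hA.prod_eigenvalues_of_det_eq_one hdet)

lemma trace_eq_card_iff_of_det_eq_one (hA : A.PosSemidef) (hdet : A.det = 1) :
    A.trace = Fintype.card n ↔ A = 1 := by
  refine ⟨fun h => ?_, fun h => by simp [h]⟩
  rw [hA.trace_eq_sum_eigenvalues, Real.sum_eq_card_iff_of_prod_eq_one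
    (hA.eigenvalues_pos_of_det_eq_one hdet) (hA.prod_eigenvalues_of_det_eq_one hdet)] at h
  have hone : hA.1.eigenvalues = 1 := funext h
  conv_lhs => rw [hA.1.spectral_theorem, hone]
  simp

end PosSemidef

section CommRing

variable {R : Type*} [CommRing R]

noncomputable def semCovariance (B : Matrix n n R) (ω : n → R) : Matrix n n R :=
  ((1 - B)ᵀ)⁻¹ * diagonal ω * (1 - B)⁻¹

def semPrecision (B : Matrix n n R) (θ : n → R) : Matrix n n R :=
  (1 - B) * diagonal θ * (1 - B)ᵀ

variable {B : Matrix n n R} {θ : n → R}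

lemma semPrecision_apply (B : Matrix n n R) (θ : n → R) (k l : n) :
    semPrecision B θ k l = ∑ m, (1 - B) k m * θ m * (1 - B) l m := by
  rw [semPrecision, mul_apply]
  simp only [mul_diagonal, transpose_apply]

lemma semPrecision_apply_self {j : n} (hB : B j j = 0) :
    semPrecision B θ j j = θ j + ∑ m, θ m * B j m ^ 2 := by
  have hterm : ∀ m, (1 - B) j m * θ m * (1 - B) j m
      = (1 : Matrix n n R) j m * θ m + θ m * B j m ^ 2 := by
    intro m
    by_cases hm : j = m
    · subst hm
      simp [hB]
    · simp [one_apply_ne hm]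
      ring
  rw [semPrecision_apply, Finset.sum_congr rfl fun m _ => hterm m, Finset.sum_add_distrib]
  simp [one_apply]

lemma semPrecision_apply_of_row_eq_zero {j : n} (hj : ∀ m, B j m = 0) (k : n) :
    semPrecision B θ k j = (1 - B) k j * θ j := by
  rw [semPrecision_apply, Finset.sum_eq_single j]
  · simp [hj]
  · intro m _ hm
    simp [hj, one_apply_ne' hm]
  · simp

lemma semPrecision_submatrix_ne (B : Matrix n n R) (θ : n → R) (j : n) (a b : {i // i ≠ j}) :
    semPrecision (B.submatrix (↑) (↑)) (θ ∘ (↑)) a b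
      = semPrecision B θ a b - (1 - B) a j * θ j * (1 - B) b j := by
  rw [semPrecision_apply, semPrecision_apply, Fintype.sum_eq_add_sum_subtype_ne _ j,
    add_sub_cancel_left]
  simp [one_apply, Subtype.ext_iff]

lemma semCovariance_eq_iff {S : Matrix n n R} {ω : n → R} (hB : IsUnit (1 - B).det) :
    S = semCovariance B ω ↔ (1 - B)ᵀ * S * (1 - B) = diagonal ω := by
  have hBt : IsUnit (1 - B)ᵀ.det := by rwa [det_transpose]
  constructor
  · rintro rfl
    simp only [semCovariance, ← mul_assoc, mul_nonsing_inv _ hBt, one_mul]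
    rw [mul_assoc, nonsing_inv_mul _ hB, mul_one]
  · intro h
    rw [semCovariance, ← h]
    simp only [← mul_assoc, nonsing_inv_mul _ hBt, one_mul]
    rw [mul_assoc, mul_nonsing_inv _ hB, mul_one]

end CommRing

lemma semCovariance_inv {R : Type*} [Field R] {B : Matrix n n R} {ω : n → R}
    (hB : IsUnit (1 - B).det) (hω : ∀ i, ω i ≠ 0) :
    (semCovariance B ω)⁻¹ = semPrecision B ω⁻¹ := by
  have hdiag : (diagonal ω)⁻¹ = diagonal ω⁻¹ :=
    inv_eq_left_inv (by simp [diagonal_mul_diagonal, inv_mul_cancel₀ (hω _)])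
  rw [semCovariance, semPrecision, mul_inv_rev, mul_inv_rev, hdiag, nonsing_inv_nonsing_inv _ hB,
    nonsing_inv_nonsing_inv _ (by rwa [det_transpose]), mul_assoc]

namespace HasAcyclicSupport

variable {R : Type*} [Field R] [LinearOrder R] [IsStrictOrderedRing R] {B B₀ : Matrix n n R}

theorem eq_of_semPrecision_eq {θ : n → R} (hθ : ∀ i, 0 < θ i) (hB : B.HasAcyclicSupport)
    (hB₀ : B₀.HasAcyclicSupport) (h : semPrecision B θ = semPrecision B₀ θ) : B = B₀ := by
  induction hcard : Fintype.card n generalizing n with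
  | zero =>
    ext i
    exact (Fintype.card_eq_zero_iff.mp hcard).elim i
  | succ k ih =>
    have : Nonempty n := Fintype.card_pos_iff.mp (by omega)
    obtain ⟨j, hj⟩ := hB.exists_row_eq_zero
    have hj₀ : ∀ m, B₀ j m = 0 := by
      have hsum : ∑ m, θ m * B₀ j m ^ 2 = 0 := by
        have hjj := congr_fun (congr_fun h j) j
        rw [semPrecision_apply_self (hB.diag_eq_zero j),
          semPrecision_apply_self (hB₀.diag_eq_zero j)] at hjj
        simpa [hj] using hjj.symm
      intro m
      have hm := (Finset.sum_eq_zero_iff_of_nonneg fun m _ =>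
        mul_nonneg (hθ m).le (sq_nonneg (B₀ j m))).mp hsum m (Finset.mem_univ m)
      simpa [(hθ m).ne'] using hm
    have hcol : ∀ l, (1 - B) l j = (1 - B₀) l j := fun l => by
      have hlj := congr_fun (congr_fun h l) j
      rwa [semPrecision_apply_of_row_eq_zero hj, semPrecision_apply_of_row_eq_zero hj₀,
        mul_left_inj' (hθ j).ne'] at hlj
    have hsub : (B.submatrix Subtype.val Subtype.val : Matrix {i // i ≠ j} {i // i ≠ j} R)
        = B₀.submatrix Subtype.val Subtype.val := by
      refine ih (θ := θ ∘ Subtype.val) (fun i => hθ i.1) (hB.submatrix _) (hB₀.submatrix _)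
        ?_ ?_
      · ext a b
        rw [semPrecision_submatrix_ne, semPrecision_submatrix_ne, h, hcol, hcol]
      · simp [Fintype.card_subtype_compl, hcard]
    ext l m
    by_cases hl : l = j
    · rw [hl, hj, hj₀]
    by_cases hm : m = j
    · simpa [hm] using hcol l
    exact congr_fun (congr_fun hsub ⟨l, hl⟩) ⟨m, hm⟩

theorem semCovariance_inj {ω : n → R} (hω : ∀ i, 0 < ω i) (hB : B.HasAcyclicSupport)
    (hB₀ : B₀.HasAcyclicSupport) : semCovariance B ω = semCovariance B₀ ω ↔ B = B₀ := by
  refine ⟨fun h => hB.eq_of_semPrecision_eq (θ := ω⁻¹) (fun i => inv_pos.mpr (hω i)) hB₀ ?_,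
    fun h => h ▸ rfl⟩
  rw [← semCovariance_inv hB.isUnit_det_one_sub fun i => (hω i).ne', h,
    semCovariance_inv hB₀.isUnit_det_one_sub fun i => (hω i).ne']

end HasAcyclicSupport

section Real

variable {d : n → ℝ}

lemma posSemidef_semCovariance (B : Matrix n n ℝ) (hd : ∀ i, 0 ≤ d i) :
    (semCovariance B d).PosSemidef := by
  have := (posSemidef_diagonal_iff.mpr hd).conjTranspose_mul_mul_same (1 - B)⁻¹
  rwa [conjTranspose_eq_transpose_of_trivial, transpose_nonsing_inv] at this

lemma det_semCovariance {B : Matrix n n ℝ} (hB : (1 - B).det = 1) :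
    (semCovariance B d).det = ∏ i, d i := by
  rw [semCovariance, det_mul, det_mul, det_nonsing_inv, det_nonsing_inv, det_transpose, hB,
    Ring.inverse_one, one_mul, mul_one, det_diagonal]

lemma diagonal_inv_sqrt_mul_mul_eq_one_iff (hd : ∀ i, 0 < d i) (X : Matrix n n ℝ) :
    diagonal (fun i => (√(d i))⁻¹) * X * diagonal (fun i => (√(d i))⁻¹) = 1 ↔
      X = diagonal d := by
  set E := diagonal fun i => (√(d i))⁻¹
  set F := diagonal fun i => √(d i)
  have hsqrt : ∀ i, √(d i) ≠ 0 := fun i => (Real.sqrt_pos.mpr (hd i)).ne'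
  have hEF : E * F = 1 := by simp [E, F, diagonal_mul_diagonal, inv_mul_cancel₀ (hsqrt _)]
  have hFE : F * E = 1 := by simp [E, F, diagonal_mul_diagonal, mul_inv_cancel₀ (hsqrt _)]
  have hFF : F * F = diagonal d := by
    simp [F, diagonal_mul_diagonal, Real.mul_self_sqrt (hd _).le]
  constructor
  · intro h
    calc X = F * E * X * (E * F) := by rw [hFE, hEF, one_mul, mul_one]
      _ = F * (E * X * E) * F := by simp only [mul_assoc]
      _ = diagonal d := by rw [h, mul_one, hFF]
  · rintro rfl
    calc E * diagonal d * E = E * F * (F * E) := by simp only [← hFF, mul_assoc]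
      _ = 1 := by rw [hEF, hFE, one_mul]

lemma det_diagonal_inv_sqrt_mul_mul (hd : ∀ i, 0 < d i) (X : Matrix n n ℝ) :
    (diagonal (fun i => (√(d i))⁻¹) * X * diagonal (fun i => (√(d i))⁻¹)).det =
      X.det / ∏ i, d i := by
  have hsq : (∏ i, (√(d i))⁻¹) * ∏ i, (√(d i))⁻¹ = (∏ i, d i)⁻¹ := by
    rw [← Finset.prod_mul_distrib, ← Finset.prod_inv_distrib]
    exact Finset.prod_congr rfl fun i _ => by rw [← mul_inv, Real.mul_self_sqrt (hd i).le]
  rw [det_mul, det_mul, det_diagonal, div_eq_mul_inv, ← hsq]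
  ring

end Real

end Matrix

/-- For `B₀` in the class `U` of matrices permutation similar to strictly upper triangular
matrices, diagonal positive definite `Ω₀ = diagonal d`, and `Σ = (I-B₀)⁻ᵀ Ω₀ (I-B₀)⁻¹`,
every `B ∈ U` satisfies `score_{Ω₀}(B) ≥ p`, with equality if and only if `B = B₀`. -/
theorem stmt_8 (p : ℕ) (B₀ : Matrix (Fin p) (Fin p) ℝ) (d : Fin p → ℝ)
    (hd : ∀ j, 0 < d j) (hB₀ : PermStrictUpper B₀)
    (S : Matrix (Fin p) (Fin p) ℝ)
    (hS : S = ((1 - B₀)ᵀ)⁻¹ * Matrix.diagonal d * (1 - B₀)⁻¹) :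
    ∀ B : Matrix (Fin p) (Fin p) ℝ, PermStrictUpper B →
      (p : ℝ) ≤ score d S B ∧ (score d S B = (p : ℝ) ↔ B = B₀) := by
  intro B hB
  have hdetB := hB.hasAcyclicSupport.det_one_sub
  set E := diagonal fun j => (√(d j))⁻¹
  set X := (1 - B)ᵀ * S * (1 - B)
  have hscore : score d S B = (E * X * E).trace := by simp only [score, E, X, mul_assoc]
  have hS' : S = semCovariance B₀ d := hS
  have hX : X.PosSemidef := by
    have := (posSemidef_semCovariance B₀ fun i => (hd i).le).conjTranspose_mul_mul_same (1 - B)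
    rwa [conjTranspose_eq_transpose_of_trivial, ← hS'] at this
  have hG : (E * X * E).PosSemidef := by
    simpa [E, conjTranspose_eq_transpose_of_trivial] using hX.conjTranspose_mul_mul_same E
  have hdet : (E * X * E).det = 1 := by
    rw [det_diagonal_inv_sqrt_mul_mul hd, det_mul, det_mul, det_transpose, hdetB, hS',
      det_semCovariance hB₀.hasAcyclicSupport.det_one_sub, one_mul, mul_one,
      div_self (Finset.prod_pos fun i _ => hd i).ne']
  have hG1 : E * X * E = 1 ↔ B = B₀ := by
    rw [diagonal_inv_sqrt_mul_mul_eq_one_iff hd,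
      ← semCovariance_eq_iff hB.hasAcyclicSupport.isUnit_det_one_sub, hS',
      hB₀.hasAcyclicSupport.semCovariance_inj hd hB.hasAcyclicSupport, eq_comm]
  have hle := hG.card_le_trace_of_det_eq_one hdet
  have hiff := hG.trace_eq_card_iff_of_det_eq_one hdet
  rw [Fintype.card_fin] at hle hiff
  exact hscore ▸ ⟨hle, hiff.trans hG1⟩
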